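/- arXiv:2409.18402 — 7 statements merged into one kernel-verified Lean document; each statement's English description precedes it below -/
import Mathlib

section
/- Suppose that for all (φ, y) ∈ ℝ^s × ℝ^d one has both p(φ,y) = q̂(φ|y) p_Y(y) and p(φ,y) = q̂(y|φ) p_Φ(φ). Then there is a constant C* > 0 such that C_{ΦY}(y) = C* for every y ∈ ℝ^d and C_{YΦ}(φ) = C* for every φ ∈ ℝ^s, and the likelihood-to-evidence ratio satisfies p(φ,y) / (p_Φ(φ) p_Y(y)) = C*^{-1} exp(⟨f(y), g(φ)⟩/τ) for all (φ, y). -/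
open MeasureTheory
open scoped RealInnerProductSpace

/-- If the model posterior and model likelihood both recover the
truth everywhere, then the normalizers are a common constant `C*` and the
likelihood-to-evidence ratio has the exponential-family form. -/
theorem normalizer_constant_of_realizable
    (d s n : ℕ) (hd : 1 ≤ d) (hs : 1 ≤ s) (hn : 1 ≤ n) (τ : ℝ) (hτ : 0 < τ)
    (p : (Fin s → ℝ) × (Fin d → ℝ) → ℝ)
    (hp_meas : Measurable p) (hp_pos : ∀ z, 0 < p z) (hp_one : ∫ z, p z = 1)
    (pΦ : (Fin s → ℝ) → ℝ) (hpΦ : ∀ φ, pΦ φ = ∫ y, p (φ, y))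
    (pY : (Fin d → ℝ) → ℝ) (hpY : ∀ y, pY y = ∫ φ, p (φ, y))
    (f : (Fin d → ℝ) → EuclideanSpace ℝ (Fin n))
    (hf_meas : Measurable f) (hf_sph : ∀ y, ‖f y‖ = 1)
    (g : (Fin s → ℝ) → EuclideanSpace ℝ (Fin n))
    (hg_meas : Measurable g) (hg_sph : ∀ φ, ‖g φ‖ = 1)
    (CΦY : (Fin d → ℝ) → ℝ)
    (hCΦY : ∀ y, CΦY y = ∫ φ', Real.exp (⟪f y, g φ'⟫ / τ) * pΦ φ')
    (CYΦ : (Fin s → ℝ) → ℝ)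
    (hCYΦ : ∀ φ, CYΦ φ = ∫ y', Real.exp (⟪f y', g φ⟫ / τ) * pY y')
    (qpost : (Fin s → ℝ) → (Fin d → ℝ) → ℝ)
    (hqpost : ∀ φ y, qpost φ y = (CΦY y)⁻¹ * Real.exp (⟪f y, g φ⟫ / τ) * pΦ φ)
    (qlik : (Fin d → ℝ) → (Fin s → ℝ) → ℝ)
    (hqlik : ∀ y φ, qlik y φ = (CYΦ φ)⁻¹ * Real.exp (⟪f y, g φ⟫ / τ) * pY y)
    (hpost_true : ∀ φ y, p (φ, y) = qpost φ y * pY y)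
    (hlik_true : ∀ φ y, p (φ, y) = qlik y φ * pΦ φ) :
    ∃ Cstar : ℝ, 0 < Cstar ∧
      (∀ y, CΦY y = Cstar) ∧
      (∀ φ, CYΦ φ = Cstar) ∧
      (∀ φ y, p (φ, y) / (pΦ φ * pY y) = Cstar⁻¹ * Real.exp (⟪f y, g φ⟫ / τ)) := by
  -- positivity facts
  have hpΦnn : ∀ φ, 0 ≤ pΦ φ := fun φ => by
    rw [hpΦ]; exact integral_nonneg fun y => (hp_pos (φ, y)).le
  -- key pointwise factorization
  have key : ∀ φ y, p (φ, y) = (CΦY y)⁻¹ * Real.exp (⟪f y, g φ⟫ / τ) * pΦ φ * pY y := by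
    intro φ y; rw [hpost_true φ y, hqpost]
  have key' : ∀ φ y, p (φ, y) = (CYΦ φ)⁻¹ * Real.exp (⟪f y, g φ⟫ / τ) * pY y * pΦ φ := by
    intro φ y; rw [hlik_true φ y, hqlik]
  have hne : ∀ φ y, (CΦY y)⁻¹ ≠ 0 ∧ pΦ φ ≠ 0 ∧ pY y ≠ 0 := by
    intro φ y
    have h := (hp_pos (φ, y)).ne'
    rw [key φ y] at h
    refine ⟨fun h0 => h ?_, fun h0 => h ?_, fun h0 => h ?_⟩ <;> rw [h0] <;> ring
  have hCYΦne : ∀ φ, (CYΦ φ)⁻¹ ≠ 0 := by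
    intro φ
    have h := (hp_pos (φ, 0)).ne'
    rw [key' φ 0] at h
    intro h0; apply h; rw [h0]; ring
  -- normalizers agree pairwise
  have hpair : ∀ φ y, CΦY y = CYΦ φ := by
    intro φ y
    have h := (key φ y).symm.trans (key' φ y)
    have hE := (Real.exp_pos (⟪f y, g φ⟫ / τ)).ne'
    have hΦ := (hne φ y).2.1
    have hY := (hne φ y).2.2
    have h2 : (CΦY y)⁻¹ * (Real.exp (⟪f y, g φ⟫ / τ) * pΦ φ * pY y)
        = (CYΦ φ)⁻¹ * (Real.exp (⟪f y, g φ⟫ / τ) * pΦ φ * pY y) := by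
      linear_combination h
    have hinv : (CΦY y)⁻¹ = (CYΦ φ)⁻¹ :=
      mul_right_cancel₀ (mul_ne_zero (mul_ne_zero hE hΦ) hY) h2
    have := inv_injective hinv
    exact this
  refine ⟨CΦY 0, ?_, fun y => (hpair 0 y).trans (hpair 0 0).symm,
    fun φ => (hpair φ 0).symm, ?_⟩
  · have hnn : 0 ≤ CΦY 0 := by
      rw [hCΦY]
      exact integral_nonneg fun φ' => mul_nonneg (Real.exp_pos _).le (hpΦnn φ')
    have hne0 : CΦY 0 ≠ 0 := fun h => (hne 0 0).1 (by rw [h, inv_zero])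
    exact hnn.lt_of_ne' hne0
  · intro φ y
    have hC : CΦY y = CΦY 0 := (hpair 0 y).trans (hpair 0 0).symm
    rw [key φ y, hC]
    have hΦ := (hne φ y).2.1
    have hY := (hne φ y).2.2
    have hrw : (CΦY 0)⁻¹ * Real.exp (⟪f y, g φ⟫ / τ) * pΦ φ * pY y
        = ((CΦY 0)⁻¹ * Real.exp (⟪f y, g φ⟫ / τ)) * (pΦ φ * pY y) := by ring
    rw [hrw, mul_div_cancel_right₀ _ (mul_ne_zero hΦ hY)]
end

section
/- Let S : ℝ^d → M and Π : ℝ^s → Ψ be surjective maps onto arbitrary nonempty sets M and Ψ. Assume: (i) there is a constant C* > 0 with p(φ,y) = C*^{-1} exp(⟨f(y), g(φ)⟩/τ) p_Φ(φ) p_Y(y) for all (φ,y); (ii) whenever S(y₁) = S(y₂), one has p(φ, y₁) p_Y(y₂) = p(φ, y₂) p_Y(y₁) for all φ (the posterior depends on y only through S(y)); and (iii) whenever Π(φ₁) = Π(φ₂), one has p(φ₁, y) p_Φ(φ₂) = p(φ₂, y) p_Φ(φ₁) for all y (the likelihood depends on φ only through Π(φ)). Then there exist maps f_M : M → S^{n-1}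 and g_Ψ : Ψ → S^{n-1} such that ⟨f_M(S(y)), g_Ψ(Π(φ))⟩ = ⟨f(y), g(φ)⟩ for all (φ,y); consequently p(φ,y)/(p_Φ(φ) p_Y(y)) = C*^{-1} exp(⟨f_M(S(y)), g_Ψ(Π(φ))⟩/τ) for all (φ,y). -/
open MeasureTheory
open scoped RealInnerProductSpace

/-- If the ratio has exponential-family form, the posterior depends
on `y` only through `S(y)` and the likelihood depends on `φ` only through `Proj(φ)`,
then the embeddings factor through `S` and `Proj` without changing the cosine kernel. -/
theorem embeddings_factor_through_sufficient_statistic_and_projection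
    (d s n : ℕ) (hd : 1 ≤ d) (hs : 1 ≤ s) (hn : 1 ≤ n) (τ : ℝ) (hτ : 0 < τ)
    (p : (Fin s → ℝ) × (Fin d → ℝ) → ℝ)
    (hp_meas : Measurable p) (hp_pos : ∀ z, 0 < p z) (hp_one : ∫ z, p z = 1)
    (pΦ : (Fin s → ℝ) → ℝ) (hpΦ : ∀ φ, pΦ φ = ∫ y, p (φ, y))
    (pY : (Fin d → ℝ) → ℝ) (hpY : ∀ y, pY y = ∫ φ, p (φ, y))
    (f : (Fin d → ℝ) → EuclideanSpace ℝ (Fin n))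
    (hf_meas : Measurable f) (hf_sph : ∀ y, ‖f y‖ = 1)
    (g : (Fin s → ℝ) → EuclideanSpace ℝ (Fin n))
    (hg_meas : Measurable g) (hg_sph : ∀ φ, ‖g φ‖ = 1)
    (M Ψ : Type) (hM : Nonempty M) (hΨ : Nonempty Ψ)
    (S : (Fin d → ℝ) → M) (hS : Function.Surjective S)
    (Proj : (Fin s → ℝ) → Ψ) (hProj : Function.Surjective Proj)
    (Cstar : ℝ) (hCstar : 0 < Cstar)
    (hform : ∀ φ y, p (φ, y) = Cstar⁻¹ * Real.exp (⟪f y, g φ⟫ / τ) * pΦ φ * pY y)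
    (hS_suff : ∀ y₁ y₂, S y₁ = S y₂ →
      ∀ φ, p (φ, y₁) * pY y₂ = p (φ, y₂) * pY y₁)
    (hProj_suff : ∀ φ₁ φ₂, Proj φ₁ = Proj φ₂ →
      ∀ y, p (φ₁, y) * pΦ φ₂ = p (φ₂, y) * pΦ φ₁) :
    ∃ (fM : M → EuclideanSpace ℝ (Fin n)) (gΨ : Ψ → EuclideanSpace ℝ (Fin n)),
      (∀ m, ‖fM m‖ = 1) ∧ (∀ ψ, ‖gΨ ψ‖ = 1) ∧
      (∀ φ y, ⟪fM (S y), gΨ (Proj φ)⟫ = ⟪f y, g φ⟫) ∧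
      (∀ φ y, p (φ, y) / (pΦ φ * pY y)
        = Cstar⁻¹ * Real.exp (⟪fM (S y), gΨ (Proj φ)⟫ / τ)) := by

  -- positivity of the marginals
  have hpΦ_nonneg : ∀ φ, 0 ≤ pΦ φ := fun φ => by
    rw [hpΦ]; exact integral_nonneg fun y => (hp_pos (φ, y)).le
  have hpY_nonneg : ∀ y, 0 ≤ pY y := fun y => by
    rw [hpY]; exact integral_nonneg fun φ => (hp_pos (φ, y)).le
  have hprod_pos : ∀ φ y, 0 < pΦ φ * pY y := by
    intro φ y
    have h := hp_pos (φ, y)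
    rw [hform φ y] at h
    have hc : 0 < Cstar⁻¹ * Real.exp (⟪f y, g φ⟫ / τ) := by positivity
    nlinarith
  have hpΦ_pos : ∀ φ, 0 < pΦ φ := fun φ => by
    rcases mul_pos_iff.mp (hprod_pos φ (fun _ => 0)) with ⟨h, _⟩ | ⟨h, _⟩
    · exact h
    · exact absurd h (not_lt.mpr (hpΦ_nonneg φ))
  have hpY_pos : ∀ y, 0 < pY y := fun y => by
    rcases mul_pos_iff.mp (hprod_pos (fun _ => 0) y) with ⟨_, h⟩ | ⟨_, h⟩
    · exact h
    · exact absurd h (not_lt.mpr (hpY_nonneg y))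
  have hτ' : τ ≠ 0 := ne_of_gt hτ
  -- inner product depends on y only through S y
  have hf_inv : ∀ y₁ y₂, S y₁ = S y₂ → ∀ φ, ⟪f y₁, g φ⟫ = ⟪f y₂, g φ⟫ := by
    intro y₁ y₂ h φ
    have h1 := hS_suff y₁ y₂ h φ
    rw [hform φ y₁, hform φ y₂] at h1
    have hne : Cstar⁻¹ * pΦ φ * pY y₁ * pY y₂ ≠ 0 := by
      have := hpΦ_pos φ; have := hpY_pos y₁; have := hpY_pos y₂; positivity
    have hexp : Real.exp (⟪f y₁, g φ⟫ / τ) = Real.exp (⟪f y₂, g φ⟫ / τ) :=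
      mul_right_cancel₀ hne (by linear_combination h1)
    have := Real.exp_injective hexp
    field_simp at this
    exact this
  have hg_inv : ∀ φ₁ φ₂, Proj φ₁ = Proj φ₂ → ∀ y, ⟪f y, g φ₁⟫ = ⟪f y, g φ₂⟫ := by
    intro φ₁ φ₂ h y
    have h1 := hProj_suff φ₁ φ₂ h y
    rw [hform φ₁ y, hform φ₂ y] at h1
    have hne : Cstar⁻¹ * pY y * pΦ φ₁ * pΦ φ₂ ≠ 0 := by
      have := hpY_pos y; have := hpΦ_pos φ₁; have := hpΦ_pos φ₂; positivity
    have hexp : Real.exp (⟪f y, g φ₁⟫ / τ) = Real.exp (⟪f y, g φ₂⟫ / τ) :=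
      mul_right_cancel₀ hne (by linear_combination h1)
    have := Real.exp_injective hexp
    field_simp at this
    exact this
  -- define the factored maps via sections of the surjections
  refine ⟨fun m => f (Function.surjInv hS m), fun ψ => g (Function.surjInv hProj ψ),
    fun m => hf_sph _, fun ψ => hg_sph _, ?_, ?_⟩
  · intro φ y
    have h1 : S (Function.surjInv hS (S y)) = S y := Function.surjInv_eq hS (S y)
    have h2 : Proj (Function.surjInv hProj (Proj φ)) = Proj φ :=
      Function.surjInv_eq hProj (Proj φ)
    calc ⟪f (Function.surjInv hS (S y)), g (Function.surjInv hProj (Proj φ))⟫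
        = ⟪f y, g (Function.surjInv hProj (Proj φ))⟫ := hf_inv _ y h1 _
      _ = ⟪f y, g φ⟫ := hg_inv _ φ h2 y
  · intro φ y
    have h1 : S (Function.surjInv hS (S y)) = S y := Function.surjInv_eq hS (S y)
    have h2 : Proj (Function.surjInv hProj (Proj φ)) = Proj φ :=
      Function.surjInv_eq hProj (Proj φ)
    have hinner : ⟪f (Function.surjInv hS (S y)), g (Function.surjInv hProj (Proj φ))⟫
        = ⟪f y, g φ⟫ := by
      calc ⟪f (Function.surjInv hS (S y)), g (Function.surjInv hProj (Proj φ))⟫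
          = ⟪f y, g (Function.surjInv hProj (Proj φ))⟫ := hf_inv _ y h1 _
        _ = ⟪f y, g φ⟫ := hg_inv _ φ h2 y
    rw [hinner, hform φ y]
    have hΦ := (hpΦ_pos φ).ne'
    have hY := (hpY_pos y).ne'
    field_simp
end

section
/- Let S : ℝ^d → M be a surjective map onto an arbitrary nonempty set M. Assume: (i) there is a constant C* > 0 with p(φ,y) = C*^{-1} exp(⟨f(y), g(φ)⟩/τ) p_Φ(φ) p_Y(y) for all (φ,y); and (ii) whenever S(y₁) = S(y₂), one has p(φ, y₁) p_Y(y₂) = p(φ, y₂) p_Y(y₁) for all φ. Then there exists a map f_opt : ℝ^d → S^{n-1} that factors through S (i.e., f_opt = f_M ∘ S for some f_M : M → S^{n-1}) and satisfies ⟨f_opt(y), g(φ)⟩ = ⟨f(y), g(φ)⟩ for all (φ,y); consequently p(φ,y)/(p_Φ(φ) p_Y(y)) = C*^{-1} exp(⟨f_opt(y), g(φ)⟩/τ) for all (φ,y). -/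
open MeasureTheory
open scoped RealInnerProductSpace

/-- (Optimal data compression.) If the ratio has exponential-family
form and the posterior depends on `y` only through `S(y)`, then there is an encoder
`f_opt` factoring through `S` that is a drop-in replacement for `f`. -/
theorem optimal_compression_encoder_factors_through_statistic
    (d s n : ℕ) (hd : 1 ≤ d) (hs : 1 ≤ s) (hn : 1 ≤ n) (τ : ℝ) (hτ : 0 < τ)
    (p : (Fin s → ℝ) × (Fin d → ℝ) → ℝ)
    (hp_meas : Measurable p) (hp_pos : ∀ z, 0 < p z) (hp_one : ∫ z, p z = 1)
    (pΦ : (Fin s → ℝ) → ℝ) (hpΦ : ∀ φ, pΦ φ = ∫ y, p (φ, y))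
    (pY : (Fin d → ℝ) → ℝ) (hpY : ∀ y, pY y = ∫ φ, p (φ, y))
    (f : (Fin d → ℝ) → EuclideanSpace ℝ (Fin n))
    (hf_meas : Measurable f) (hf_sph : ∀ y, ‖f y‖ = 1)
    (g : (Fin s → ℝ) → EuclideanSpace ℝ (Fin n))
    (hg_meas : Measurable g) (hg_sph : ∀ φ, ‖g φ‖ = 1)
    (M : Type) (hM : Nonempty M)
    (S : (Fin d → ℝ) → M) (hS : Function.Surjective S)
    (Cstar : ℝ) (hCstar : 0 < Cstar)
    (hform : ∀ φ y, p (φ, y) = Cstar⁻¹ * Real.exp (⟪f y, g φ⟫ / τ) * pΦ φ * pY y)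
    (hS_suff : ∀ y₁ y₂, S y₁ = S y₂ →
      ∀ φ, p (φ, y₁) * pY y₂ = p (φ, y₂) * pY y₁) :
    ∃ fopt : (Fin d → ℝ) → EuclideanSpace ℝ (Fin n),
      (∀ y, ‖fopt y‖ = 1) ∧
      (∃ fM : M → EuclideanSpace ℝ (Fin n), fopt = fM ∘ S) ∧
      (∀ φ y, ⟪fopt y, g φ⟫ = ⟪f y, g φ⟫) ∧
      (∀ φ y, p (φ, y) / (pΦ φ * pY y)
        = Cstar⁻¹ * Real.exp (⟪fopt y, g φ⟫ / τ)) := by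
  classical
  -- positivity facts
  have hprod : ∀ φ y, 0 < pΦ φ * pY y ∨ (pΦ φ < 0 ∧ pY y < 0) → True := fun _ _ _ => trivial
  have hne : ∀ φ y, pΦ φ * pY y ≠ 0 := by
    intro φ y
    have h := hform φ y
    have hp := hp_pos (φ, y)
    intro h0
    rw [h, mul_assoc, h0, mul_zero] at hp
    exact lt_irrefl 0 hp
  -- inner products agree on S-fibers
  have key : ∀ y₁ y₂, S y₁ = S y₂ → ∀ φ, ⟪f y₁, g φ⟫ = ⟪f y₂, g φ⟫ := by
    intro y₁ y₂ hSeq φ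
    have h := hS_suff y₁ y₂ hSeq φ
    rw [hform φ y₁, hform φ y₂] at h
    have h1 := hne φ y₁
    have h2 := hne φ y₂
    have hpΦne : pΦ φ ≠ 0 := fun h0 => h1 (by rw [h0, zero_mul])
    have hY1 : pY y₁ ≠ 0 := fun h0 => h1 (by rw [h0, mul_zero])
    have hY2 : pY y₂ ≠ 0 := fun h0 => h2 (by rw [h0, mul_zero])
    have hC : Cstar⁻¹ ≠ 0 := inv_ne_zero hCstar.ne'
    have hK : Cstar⁻¹ * pΦ φ * (pY y₁ * pY y₂) ≠ 0 :=
      mul_ne_zero (mul_ne_zero hC hpΦne) (mul_ne_zero hY1 hY2)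
    have hexp : Real.exp (⟪f y₁, g φ⟫ / τ) = Real.exp (⟪f y₂, g φ⟫ / τ) :=
      mul_left_cancel₀ hK (by linear_combination h)
    have := Real.exp_injective hexp
    field_simp at this
    exact this
  -- define fopt via chosen preimages
  refine ⟨fun y => f (Function.surjInv hS (S y)), ?_, ?_, ?_, ?_⟩
  · intro y; exact hf_sph _
  · exact ⟨fun m => f (Function.surjInv hS m), rfl⟩
  · intro φ y
    exact key _ y (Function.surjInv_eq hS (S y)) φ
  · intro φ y
    have hinner : ⟪f (Function.surjInv hS (S y)), g φ⟫ = ⟪f y, g φ⟫ :=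
      key _ y (Function.surjInv_eq hS (S y)) φ
    rw [hinner, hform φ y, mul_assoc, mul_assoc, mul_div_assoc,
      mul_div_assoc, div_self (hne φ y), mul_one]
end

section
/- Let Π : ℝ^s → Ψ be a surjective map onto an arbitrary nonempty set Ψ (the projection associated with a partition of parameter space into non-identifiable equivalence classes). Assume: (i) there is a constant C* > 0 with p(φ,y) = C*^{-1} exp(⟨f(y), g(φ)⟩/τ) p_Φ(φ) p_Y(y) for all (φ,y); and (ii) whenever Π(φ₁) = Π(φ₂), one has p(φ₁, y) p_Φ(φ₂) = p(φ₂, y) p_Φ(φ₁) for all y (parameters in the same class yield identical data distributions). Then there exists a map g_eff : ℝ^s → S^{n-1} that factors through Π (i.e., g_eff = g_Ψ ∘ Π for some g_Ψ : Ψ → S^{n-1}) and satisfies ⟨f(y), g_eff(φ)⟩ = ⟨f(y), g(φ)⟩ for all (φ,y); consequently p(φ,y)/(p_Φ(φ) p_Y(y)) = C*^{-1} exp(⟨f(y), g_eff(φ)⟩/τ) for all (φ,y). -/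
open MeasureTheory
open scoped RealInnerProductSpace

/-- (Non-identifiable parameters.) If the ratio has
exponential-family form and the likelihood depends on `φ` only through the
projection `Proj(φ)` onto equivalence classes, then there is an effective latent
emulator `g_eff` factoring through `Proj` that is a drop-in replacement for `g`. -/
theorem effective_emulator_factors_through_projection
    (d s n : ℕ) (hd : 1 ≤ d) (hs : 1 ≤ s) (hn : 1 ≤ n) (τ : ℝ) (hτ : 0 < τ)
    (p : (Fin s → ℝ) × (Fin d → ℝ) → ℝ)
    (hp_meas : Measurable p) (hp_pos : ∀ z, 0 < p z) (hp_one : ∫ z, p z = 1)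
    (pΦ : (Fin s → ℝ) → ℝ) (hpΦ : ∀ φ, pΦ φ = ∫ y, p (φ, y))
    (pY : (Fin d → ℝ) → ℝ) (hpY : ∀ y, pY y = ∫ φ, p (φ, y))
    (f : (Fin d → ℝ) → EuclideanSpace ℝ (Fin n))
    (hf_meas : Measurable f) (hf_sph : ∀ y, ‖f y‖ = 1)
    (g : (Fin s → ℝ) → EuclideanSpace ℝ (Fin n))
    (hg_meas : Measurable g) (hg_sph : ∀ φ, ‖g φ‖ = 1)
    (Ψ : Type) (hΨ : Nonempty Ψ)
    (Proj : (Fin s → ℝ) → Ψ) (hProj : Function.Surjective Proj)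
    (Cstar : ℝ) (hCstar : 0 < Cstar)
    (hform : ∀ φ y, p (φ, y) = Cstar⁻¹ * Real.exp (⟪f y, g φ⟫ / τ) * pΦ φ * pY y)
    (hProj_suff : ∀ φ₁ φ₂, Proj φ₁ = Proj φ₂ →
      ∀ y, p (φ₁, y) * pΦ φ₂ = p (φ₂, y) * pΦ φ₁) :
    ∃ geff : (Fin s → ℝ) → EuclideanSpace ℝ (Fin n),
      (∀ φ, ‖geff φ‖ = 1) ∧
      (∃ gΨ : Ψ → EuclideanSpace ℝ (Fin n), geff = gΨ ∘ Proj) ∧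
      (∀ φ y, ⟪f y, geff φ⟫ = ⟪f y, g φ⟫) ∧
      (∀ φ y, p (φ, y) / (pΦ φ * pY y)
        = Cstar⁻¹ * Real.exp (⟪f y, geff φ⟫ / τ)) := by

  classical
  -- positivity of marginals
  have hne : ∀ φ y, pΦ φ ≠ 0 ∧ pY y ≠ 0 := by
    intro φ y
    have h := hform φ y
    have hp := (hp_pos (φ, y)).ne'
    constructor
    · intro h0; rw [h0] at h; simp at h; exact hp (by rw [h])
    · intro h0; rw [h0] at h; simp at h; exact hp (by rw [h])
  -- same class implies same inner products
  have key : ∀ φ₁ φ₂, Proj φ₁ = Proj φ₂ → ∀ y, ⟪f y, g φ₁⟫ = ⟪f y, g φ₂⟫ := by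
    intro φ₁ φ₂ hpr y
    have h := hProj_suff φ₁ φ₂ hpr y
    rw [hform φ₁ y, hform φ₂ y] at h
    have h1 := (hne φ₁ y).1
    have h2 := (hne φ₂ y).1
    have hy := (hne φ₁ y).2
    have hC : Cstar⁻¹ ≠ 0 := inv_ne_zero hCstar.ne'
    have hprod : pΦ φ₁ * pY y * pΦ φ₂ ≠ 0 := mul_ne_zero (mul_ne_zero h1 hy) h2
    have hCi : Cstar * Cstar⁻¹ = 1 := mul_inv_cancel₀ hCstar.ne'
    have hexp : Real.exp (⟪f y, g φ₁⟫ / τ) = Real.exp (⟪f y, g φ₂⟫ / τ) := by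
      apply mul_right_cancel₀ hprod
      linear_combination Cstar * h -
        (Real.exp (⟪f y, g φ₁⟫ / τ) * pΦ φ₁ * pY y * pΦ φ₂ -
          Real.exp (⟪f y, g φ₂⟫ / τ) * pΦ φ₂ * pY y * pΦ φ₁) * hCi
    have h3 := Real.exp_injective hexp
    have h4 := congrArg (· * τ) h3
    simpa [div_mul_cancel₀, hτ.ne'] using h4
  set σ := Function.surjInv hProj with hσ
  refine ⟨fun φ => g (σ (Proj φ)), ?_, ⟨fun ψ => g (σ ψ), rfl⟩, ?_, ?_⟩
  · intro φ; exact hg_sph _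
  · intro φ y
    exact key _ φ (Function.surjInv_eq hProj (Proj φ)) y
  · intro φ y
    have hinner : ⟪f y, g (σ (Proj φ))⟫ = ⟪f y, g φ⟫ :=
      key _ φ (Function.surjInv_eq hProj (Proj φ)) y
    rw [hinner, hform φ y]
    have h1 := (hne φ y).1
    have h2 := (hne φ y).2
    field_simp
end

section
/- Let Y and Φ be nonempty sets, n ≥ 1, and let f, f̂ : Y → ℝ^n and g, ĝ : Φ → ℝ^n take values in the unit sphere S^{n-1}. Suppose: (i) ⟨f̂(y), ĝ(φ)⟩ = ⟨f(y), g(φ)⟩ for all y ∈ Y and φ ∈ Φ; (ii) the image f(Y) is all of S^{n-1}; and (iii) the image g(Φ) spans ℝ^n. Then there exists an orthogonal linear map R : ℝ^n → ℝ^n (R ∈ O(n)) such that f̂(y) = R f(y) for all y ∈ Y and ĝ(φ) = R g(φ) for all φ ∈ Φ. -/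
open scoped RealInnerProductSpace

/-- (Cross-domain Mazur–Ulam-type rigidity.) Two pairs of
sphere-valued embeddings inducing the same cosine-similarity kernel agree up to a
common orthogonal transformation of the latent space, provided the image of `f`
is the whole sphere and the image of `g` spans. -/
theorem embeddings_agree_up_to_orthogonal_map
    (Y Φ : Type) (hY : Nonempty Y) (hΦ : Nonempty Φ) (n : ℕ) (hn : 1 ≤ n)
    (f fhat : Y → EuclideanSpace ℝ (Fin n)) (g ghat : Φ → EuclideanSpace ℝ (Fin n))
    (hf : ∀ y, ‖f y‖ = 1) (hfhat : ∀ y, ‖fhat y‖ = 1)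
    (hg : ∀ φ, ‖g φ‖ = 1) (hghat : ∀ φ, ‖ghat φ‖ = 1)
    (hkernel : ∀ y φ, ⟪fhat y, ghat φ⟫ = ⟪f y, g φ⟫)
    (hf_surj : Set.range f = Metric.sphere (0 : EuclideanSpace ℝ (Fin n)) 1)
    (hg_span : Submodule.span ℝ (Set.range g) = ⊤) :
    ∃ R : EuclideanSpace ℝ (Fin n) ≃ₗᵢ[ℝ] EuclideanSpace ℝ (Fin n),
      (∀ y, fhat y = R (f y)) ∧ (∀ φ, ghat φ = R (g φ)) := by
  classical
  have _trivial : True := trivial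
  -- Key lemma A: for each φ there is y with f y = g φ and fhat y = ghat φ.
  have keyA : ∀ φ, ∃ y, f y = g φ ∧ fhat y = ghat φ := by
    intro φ
    have hmem : g φ ∈ Set.range f := by
      rw [hf_surj]; simp [hg φ]
    obtain ⟨y, hy⟩ := hmem
    refine ⟨y, hy, ?_⟩
    have h1 : ⟪fhat y, ghat φ⟫ = 1 := by
      rw [hkernel, hy, real_inner_self_eq_norm_sq, hg φ]; norm_num
    exact (inner_eq_one_iff_of_norm_eq_one (hfhat y) (hghat φ)).mp h1
  -- Gram matrices of g and ghat coincide.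
  have gram : ∀ φ φ', ⟪ghat φ, ghat φ'⟫ = ⟪g φ, g φ'⟫ := by
    intro φ φ'
    obtain ⟨y, hy, hy'⟩ := keyA φ
    rw [← hy', ← hy, hkernel]
  -- Extract a basis from the range of g.
  obtain ⟨s, hs_sub, hs_span, hs_li⟩ := exists_linearIndependent ℝ (Set.range g)
  rw [hg_span] at hs_span
  let b : Module.Basis s ℝ (EuclideanSpace ℝ (Fin n)) := Module.Basis.mk hs_li (by rw [Subtype.range_coe]; exact hs_span.ge)
  have hb : ∀ i : s, b i = (i : EuclideanSpace ℝ (Fin n)) := fun i => Module.Basis.mk_apply hs_li _ i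
  -- choose preimages under g
  have hchoice : ∀ i : s, ∃ φ, g φ = (i : EuclideanSpace ℝ (Fin n)) := fun i => hs_sub i.2
  choose φi hφi using hchoice
  -- the linear map sending b i to ghat (φi i)
  let L : EuclideanSpace ℝ (Fin n) →ₗ[ℝ] EuclideanSpace ℝ (Fin n) := b.constr ℝ (fun i => ghat (φi i))
  have hLb : ∀ i : s, L (b i) = ghat (φi i) := fun i => b.constr_basis ℝ _ i
  -- L preserves inner products
  have hinner : ∀ x y : EuclideanSpace ℝ (Fin n), ⟪L x, L y⟫ = ⟪x, y⟫ := by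
    have hE : (innerₗ (EuclideanSpace ℝ (Fin n))).compl₁₂ L L = innerₗ (EuclideanSpace ℝ (Fin n)) := by
      apply b.ext; intro i
      apply b.ext; intro j
      simp only [LinearMap.compl₁₂_apply, innerₗ_apply_apply, hLb]
      rw [gram, hφi, hφi, hb, hb]
    intro x y
    have := LinearMap.congr_fun (LinearMap.congr_fun hE x) y
    simpa using this
  -- L is bijective
  have hLinj : Function.Injective L := by
    intro x y hxy
    have : ⟪x - y, x - y⟫ = 0 := by
      have := hinner (x - y) (x - y)
      rw [map_sub, hxy, sub_self, inner_zero_left] at this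
      exact this.symm
    exact sub_eq_zero.mp (inner_self_eq_zero.mp this)
  have hLsurj : Function.Surjective L :=
    (LinearMap.injective_iff_surjective).mp hLinj
  let Le : EuclideanSpace ℝ (Fin n) ≃ₗ[ℝ] EuclideanSpace ℝ (Fin n) := LinearEquiv.ofBijective L ⟨hLinj, hLsurj⟩
  let R : EuclideanSpace ℝ (Fin n) ≃ₗᵢ[ℝ] EuclideanSpace ℝ (Fin n) := Le.isometryOfInner (fun x y => hinner x y)
  have hR : ∀ x, R x = L x := fun x => rfl
  -- first conclusion
  have hfst : ∀ y, fhat y = R (f y) := by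
    intro y
    -- the functional x ↦ ⟪fhat y, L x⟫ - ⟪f y, x⟫ vanishes
    have hfun : ∀ x : EuclideanSpace ℝ (Fin n), ⟪fhat y, L x⟫ = ⟪f y, x⟫ := by
      have hE : (innerₗ (EuclideanSpace ℝ (Fin n)) (fhat y)).comp L = innerₗ (EuclideanSpace ℝ (Fin n)) (f y) := by
        apply b.ext; intro i
        simp only [LinearMap.comp_apply, innerₗ_apply_apply]
        rw [hLb, hkernel, hφi, hb]
      intro x
      have := LinearMap.congr_fun hE x
      simpa using this
    have : ∀ w : EuclideanSpace ℝ (Fin n), ⟪fhat y - R (f y), w⟫ = 0 := by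
      intro w
      obtain ⟨x, hx⟩ := hLsurj w
      rw [inner_sub_left, hR, ← hx, hfun, hinner]
      exact sub_self _
    have h0 := this (fhat y - R (f y))
    rw [inner_self_eq_zero] at h0
    exact sub_eq_zero.mp h0
  refine ⟨R, hfst, ?_⟩
  intro φ
  obtain ⟨y, hy, hy'⟩ := keyA φ
  rw [← hy', hfst y, hy]
end

section
/- Let n ≥ 1, d, s ≥ 1, κ > 0, and A, B > 0. Let f, f̂ : ℝ^d → ℝ^n and g, ĝ : ℝ^s → ℝ^n take values in the unit sphere S^{n-1}. Suppose: (i) A^{-1} exp(κ ⟨f̂(y), ĝ(φ)⟩) = B^{-1} exp(κ ⟨f(y), g(φ)⟩) for all (y, φ) ∈ ℝ^d × ℝ^s (equality of the two exponential-family likelihood ratios); (ii) the image f(ℝ^d) is all of S^{n-1}; and (iii) the image g(ℝ^s) spans ℝ^n. Then A = B, and there exists an orthogonal linear map R : ℝ^n → ℝ^n (R ∈ O(n)) such that f̂(y) = R f(y) for all y and ĝ(φ) = R g(φ) for all φ; in particular the learned embeddings reconstruct the generating pair (f, g) up to a rotation of the latent sphere. -/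
open scoped RealInnerProductSpace

private lemma unit_inner_eq {E : Type*} [NormedAddCommGroup E] [InnerProductSpace ℝ E]
    {u v : E} (hu : ‖u‖ = 1) (hv : ‖v‖ = 1) (h : ⟪u, v⟫ = 1) : u = v := by
  have h2 := norm_sub_sq_real u v
  rw [hu, hv, h] at h2
  have : ‖u - v‖ = 0 := by nlinarith [norm_nonneg (u - v)]
  simpa [sub_eq_zero] using norm_eq_zero.mp this

/-- If two exponential-family likelihood ratios built from
sphere-valued embeddings coincide, then the normalizers agree and the learned
embeddings reconstruct the generating pair up to an orthogonal transformation
of the latent sphere. -/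
theorem exponential_ratios_eq_iff_rotation
    (n d s : ℕ) (hn : 1 ≤ n) (hd : 1 ≤ d) (hs : 1 ≤ s) (κ : ℝ) (hκ : 0 < κ)
    (A B : ℝ) (hA : 0 < A) (hB : 0 < B)
    (f fhat : (Fin d → ℝ) → EuclideanSpace ℝ (Fin n))
    (g ghat : (Fin s → ℝ) → EuclideanSpace ℝ (Fin n))
    (hf : ∀ y, ‖f y‖ = 1) (hfhat : ∀ y, ‖fhat y‖ = 1)
    (hg : ∀ φ, ‖g φ‖ = 1) (hghat : ∀ φ, ‖ghat φ‖ = 1)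
    (hratio : ∀ y φ, A⁻¹ * Real.exp (κ * ⟪fhat y, ghat φ⟫)
      = B⁻¹ * Real.exp (κ * ⟪f y, g φ⟫))
    (hf_surj : Set.range f = Metric.sphere (0 : EuclideanSpace ℝ (Fin n)) 1)
    (hg_span : Submodule.span ℝ (Set.range g) = ⊤) :
    A = B ∧
    ∃ R : EuclideanSpace ℝ (Fin n) ≃ₗᵢ[ℝ] EuclideanSpace ℝ (Fin n),
      (∀ y, fhat y = R (f y)) ∧ (∀ φ, ghat φ = R (g φ)) := by
  -- take logs
  have hlog : ∀ y φ, -Real.log A + κ * ⟪fhat y, ghat φ⟫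
      = -Real.log B + κ * ⟪f y, g φ⟫ := by
    intro y φ
    have h := congrArg Real.log (hratio y φ)
    rwa [Real.log_mul (by positivity) (Real.exp_ne_zero _),
      Real.log_mul (by positivity) (Real.exp_ne_zero _),
      Real.log_inv, Real.log_inv, Real.log_exp, Real.log_exp] at h
  set c : ℝ := (Real.log A - Real.log B) / κ with hc
  have key : ∀ y φ, ⟪fhat y, ghat φ⟫ = ⟪f y, g φ⟫ + c := by
    intro y φ
    have h := hlog y φ
    have h2 : κ * ⟪fhat y, ghat φ⟫ = κ * (⟪f y, g φ⟫ + c) := by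
      rw [hc, mul_add, mul_div_cancel₀ _ (ne_of_gt hκ)]
      linarith
    exact mul_left_cancel₀ (ne_of_gt hκ) h2
  -- surjectivity of f onto the sphere
  have hsurj : ∀ v : EuclideanSpace ℝ (Fin n), ‖v‖ = 1 → ∃ y, f y = v := by
    intro v hv
    have : v ∈ Set.range f := by
      rw [hf_surj]; simpa [mem_sphere_zero_iff_norm] using hv
    exact this
  -- c = 0
  have hc0 : c = 0 := by
    obtain ⟨y1, hy1⟩ := hsurj (g 0) (hg 0)
    obtain ⟨y2, hy2⟩ := hsurj (-(g 0)) (by rw [norm_neg]; exact hg 0)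
    have hvv : ⟪g 0, g 0⟫ = 1 := by
      rw [real_inner_self_eq_norm_sq, hg 0]; norm_num
    have h1 : ⟪fhat y1, ghat 0⟫ = 1 + c := by rw [key, hy1, hvv]
    have h2 : ⟪fhat y2, ghat 0⟫ = -1 + c := by
      rw [key, hy2, inner_neg_left, hvv]
    have b1 := abs_real_inner_le_norm (fhat y1) (ghat 0)
    have b2 := abs_real_inner_le_norm (fhat y2) (ghat 0)
    rw [hfhat, hghat, h1, one_mul] at b1
    rw [hfhat, hghat, h2, one_mul] at b2
    have e1 := le_of_abs_le b1
    have e2 := neg_le_of_abs_le b2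
    linarith
  have hAB : A = B := by
    have hlAB : Real.log A = Real.log B := by
      rw [hc, div_eq_zero_iff] at hc0
      rcases hc0 with h | h
      · linarith
      · exact absurd h (ne_of_gt hκ)
    calc A = Real.exp (Real.log A) := (Real.exp_log hA).symm
      _ = Real.exp (Real.log B) := by rw [hlAB]
      _ = B := Real.exp_log hB
  have key2 : ∀ y φ, ⟪fhat y, ghat φ⟫ = ⟪f y, g φ⟫ := by
    intro y φ; rw [key, hc0, add_zero]
  -- ghat preserves inner products with respect to g
  have hmatch : ∀ φ, ∃ y, f y = g φ ∧ fhat y = ghat φ := by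
    intro φ
    obtain ⟨y, hy⟩ := hsurj (g φ) (hg φ)
    refine ⟨y, hy, unit_inner_eq (hfhat y) (hghat φ) ?_⟩
    rw [key2, hy, real_inner_self_eq_norm_sq, hg φ]; norm_num
  have step5 : ∀ φ φ', ⟪ghat φ, ghat φ'⟫ = ⟪g φ, g φ'⟫ := by
    intro φ φ'
    obtain ⟨y, hy, hy'⟩ := hmatch φ
    rw [← hy', key2, hy]
  -- basis inside range g
  obtain ⟨bset, hbsub, hbspan, hli⟩ := exists_linearIndependent ℝ (Set.range g)
  have hspan_top : ⊤ ≤ Submodule.span ℝ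
      (Set.range ((↑) : bset → EuclideanSpace ℝ (Fin n))) := by
    rw [Subtype.range_coe, hbspan, hg_span]
  let bas : Module.Basis bset ℝ (EuclideanSpace ℝ (Fin n)) := Module.Basis.mk hli hspan_top
  have hpre : ∀ u : bset, ∃ φ, g φ = (u : EuclideanSpace ℝ (Fin n)) := fun u => hbsub u.2
  choose φc hφc using hpre
  let T : EuclideanSpace ℝ (Fin n) →ₗ[ℝ] EuclideanSpace ℝ (Fin n) :=
    bas.constr ℝ (fun u => ghat (φc u))
  have hTu : ∀ u : bset, T (u : EuclideanSpace ℝ (Fin n)) = ghat (φc u) := by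
    intro u
    have he : (u : EuclideanSpace ℝ (Fin n)) = bas u := by rw [Module.Basis.mk_apply]
    rw [he]
    exact bas.constr_basis ℝ _ u
  -- helpers: extend identities from the basis set to all of the space
  have helper : ∀ v w : EuclideanSpace ℝ (Fin n),
      (∀ u : bset, ⟪v, T u⟫ = ⟪w, (u : EuclideanSpace ℝ (Fin n))⟫) →
      ∀ x, ⟪v, T x⟫ = ⟪w, x⟫ := by
    intro v w hgen x
    have hx : x ∈ Submodule.span ℝ bset := by rw [hbspan, hg_span]; trivial
    induction hx using Submodule.span_induction with
    | mem u hu => exact hgen ⟨u, hu⟩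
    | zero => simp
    | add a b _ _ ha hb => rw [map_add, inner_add_right, inner_add_right, ha, hb]
    | smul r a _ ha =>
        rw [map_smul, real_inner_smul_right, real_inner_smul_right, ha]
  have helper' : ∀ v w : EuclideanSpace ℝ (Fin n),
      (∀ u : bset, ⟪T u, v⟫ = ⟪(u : EuclideanSpace ℝ (Fin n)), w⟫) →
      ∀ x, ⟪T x, v⟫ = ⟪x, w⟫ := by
    intro v w hgen x
    have hx : x ∈ Submodule.span ℝ bset := by rw [hbspan, hg_span]; trivial
    induction hx using Submodule.span_induction with
    | mem u hu => exact hgen ⟨u, hu⟩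
    | zero => simp
    | add a b _ _ ha hb => rw [map_add, inner_add_left, inner_add_left, ha, hb]
    | smul r a _ ha =>
        rw [map_smul, real_inner_smul_left, real_inner_smul_left, ha]
  -- T preserves inner products
  have h1 : ∀ u : bset, ∀ x, ⟪T u, T x⟫ = ⟪(u : EuclideanSpace ℝ (Fin n)), x⟫ := by
    intro u
    apply helper
    intro u'
    rw [hTu u, hTu u', step5, hφc, hφc]
  have hT : ∀ x x', ⟪T x, T x'⟫ = ⟪x, x'⟫ := fun x x' =>
    helper' (T x') x' (fun u => h1 u x') x
  let Ri : EuclideanSpace ℝ (Fin n) →ₗᵢ[ℝ] EuclideanSpace ℝ (Fin n) :=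
    T.isometryOfInner hT
  let R : EuclideanSpace ℝ (Fin n) ≃ₗᵢ[ℝ] EuclideanSpace ℝ (Fin n) :=
    Ri.toLinearIsometryEquiv rfl
  have hRT : ∀ x, R x = T x := fun x => rfl
  refine ⟨hAB, R, fun y => ?_, fun φ => ?_⟩
  · have hnorm : ‖R (f y)‖ = 1 := by rw [R.norm_map, hf y]
    refine unit_inner_eq (hfhat y) hnorm ?_
    rw [hRT,
      helper (fhat y) (f y) (fun u => by rw [hTu u, key2, hφc]) (f y),
      real_inner_self_eq_norm_sq, hf y]
    norm_num
  · have hnorm : ‖R (g φ)‖ = 1 := by rw [R.norm_map, hg φ]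
    refine unit_inner_eq (hghat φ) hnorm ?_
    rw [hRT,
      helper (ghat φ) (g φ) (fun u => by rw [hTu u, step5, hφc]) (g φ),
      real_inner_self_eq_norm_sq, hg φ]
    norm_num
end

section
/- Suppose there is a constant C* > 0 with p(φ,y) = C*^{-1} exp(⟨f(y), g(φ)⟩/τ) p_Φ(φ) p_Y(y) for all (φ,y). Let p̃ : ℝ^s → ℝ be any measurable probability density (an alternative inference prior), and define p̃_Y(y) = ∫ (p(φ',y)/p_Φ(φ')) p̃(φ') dφ' and C̃(y) = ∫ exp(⟨f(y), g(φ')⟩/τ) p̃(φ') dφ'. Then for every y ∈ ℝ^d: (a) C̃(y) = C* · p̃_Y(y) / p_Y(y); and (b) for every φ ∈ ℝ^s, C̃(y)^{-1} exp(⟨f(y), g(φ)⟩/τ) p̃(φ) = (p(φ,y)/p_Φ(φ)) · p̃(φ) / p̃_Y(y), i.e., the model distribution built from the learned ratio and the alternative prior equals the Bayesian posterior under the alternative prior. -/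
open MeasureTheory
open scoped RealInnerProductSpace

/-- (Alternative inference priors.) If the learned ratio has the
exponential-family form with constant normalizer `C*`, then for any alternative
prior `p̃` the new normalizer is `C̃(y) = C* p̃_Y(y)/p_Y(y)`, and the model
distribution built from the learned ratio and the alternative prior is the
Bayesian posterior under the alternative prior. -/
theorem alternative_prior_posterior
    (d s n : ℕ) (hd : 1 ≤ d) (hs : 1 ≤ s) (hn : 1 ≤ n) (τ : ℝ) (hτ : 0 < τ)
    (p : (Fin s → ℝ) × (Fin d → ℝ) → ℝ)
    (hp_meas : Measurable p) (hp_pos : ∀ z, 0 < p z) (hp_one : ∫ z, p z = 1)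
    (pΦ : (Fin s → ℝ) → ℝ) (hpΦ : ∀ φ, pΦ φ = ∫ y, p (φ, y))
    (pY : (Fin d → ℝ) → ℝ) (hpY : ∀ y, pY y = ∫ φ, p (φ, y))
    (f : (Fin d → ℝ) → EuclideanSpace ℝ (Fin n))
    (hf_meas : Measurable f) (hf_sph : ∀ y, ‖f y‖ = 1)
    (g : (Fin s → ℝ) → EuclideanSpace ℝ (Fin n))
    (hg_meas : Measurable g) (hg_sph : ∀ φ, ‖g φ‖ = 1)
    (Cstar : ℝ) (hCstar : 0 < Cstar)
    (hform : ∀ φ y, p (φ, y) = Cstar⁻¹ * Real.exp (⟪f y, g φ⟫ / τ) * pΦ φ * pY y)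
    -- the alternative inference prior
    (ptilde : (Fin s → ℝ) → ℝ) (hptilde_meas : Measurable ptilde)
    (hptilde_nonneg : ∀ φ, 0 ≤ ptilde φ) (hptilde_one : ∫ φ, ptilde φ = 1)
    (ptildeY : (Fin d → ℝ) → ℝ)
    (hptildeY : ∀ y, ptildeY y = ∫ φ', (p (φ', y) / pΦ φ') * ptilde φ')
    (Ctilde : (Fin d → ℝ) → ℝ)
    (hCtilde : ∀ y, Ctilde y = ∫ φ', Real.exp (⟪f y, g φ'⟫ / τ) * ptilde φ') :
    ∀ y,
      Ctilde y = Cstar * ptildeY y / pY y ∧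
      ∀ φ, (Ctilde y)⁻¹ * Real.exp (⟪f y, g φ⟫ / τ) * ptilde φ
        = (p (φ, y) / pΦ φ) * ptilde φ / ptildeY y := by

  have hpΦ_nonneg : ∀ φ, 0 ≤ pΦ φ := fun φ => by
    rw [hpΦ]; exact integral_nonneg fun y => (hp_pos _).le
  have hpY_nonneg : ∀ y, 0 ≤ pY y := fun y => by
    rw [hpY]; exact integral_nonneg fun φ => (hp_pos _).le
  have hpos : ∀ φ y, 0 < pΦ φ ∧ 0 < pY y := by
    intro φ y
    have h := hp_pos (φ, y)
    rw [hform φ y] at h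
    have hc : 0 < Cstar⁻¹ * Real.exp (⟪f y, g φ⟫ / τ) :=
      mul_pos (inv_pos.mpr hCstar) (Real.exp_pos _)
    rw [mul_assoc] at h
    have hprod : 0 < pΦ φ * pY y := by
      by_contra hcon
      push_neg at hcon
      nlinarith
    constructor
    · rcases (hpΦ_nonneg φ).lt_or_eq with h1 | h1
      · exact h1
      · exfalso; rw [← h1, zero_mul] at hprod; exact lt_irrefl 0 hprod
    · rcases (hpY_nonneg y).lt_or_eq with h1 | h1
      · exact h1
      · exfalso; rw [← h1, mul_zero] at hprod; exact lt_irrefl 0 hprod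
  intro y
  have hpYy : 0 < pY y := (hpos 0 y).2
  have hratio : ∀ φ', p (φ', y) / pΦ φ' = Cstar⁻¹ * Real.exp (⟪f y, g φ'⟫ / τ) * pY y := by
    intro φ'
    have hΦ : pΦ φ' ≠ 0 := ne_of_gt (hpos φ' y).1
    rw [hform φ' y]
    field_simp
  have key : ptildeY y = Cstar⁻¹ * pY y * Ctilde y := by
    rw [hptildeY, hCtilde, ← integral_const_mul]
    congr 1
    funext φ'
    rw [hratio φ']
    ring
  have hCne : Cstar ≠ 0 := ne_of_gt hCstar
  have hYne : pY y ≠ 0 := ne_of_gt hpYy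
  constructor
  · rw [key]; field_simp
  · intro φ
    rw [key, hratio φ]
    by_cases hC : Ctilde y = 0
    · simp [hC]
    · field_simp
end
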